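/- Let E be a real inner product space, let f : E → ℝ be differentiable with gradient ∇f, let f be μ-strongly convex on E with μ > 0, and let ∇f be L-Lipschitz with 0 < μ ≤ L. For x ≠ x' in E set s = x − x' and y = ∇f(x) − ∇f(x'), and note y ≠ 0. Then the second Barzilai–Borwein step size α₂ = ⟨s, y⟩ / ‖y‖² satisfies 1/L ≤ α₂ ≤ α₁ ≤ 1/μ, where α₁ = ‖s‖² / ⟨s, y⟩ is the first Barzilai–Borwein step size. -/

import Mathlib

open RealInnerProductSpace

section Helpers

variable {E : Type*} [NormedAddCommGroup E] [InnerProductSpace ℝ E] [CompleteSpace E]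

/-- Derivative of a differentiable function along a line. -/
lemma line_hasDerivAt (h : E → ℝ) (gh : E → E) (hg : ∀ z, HasGradientAt h (gh z) z)
    (a v : E) (t : ℝ) :
    HasDerivAt (fun t : ℝ => h (a + t • v)) ⟪gh (a + t • v), v⟫ t := by
  have hc : HasDerivAt (fun t : ℝ => a + t • v) v t := by
    simpa using ((hasDerivAt_id t).smul_const v).const_add a
  have hF : HasFDerivAt h (InnerProductSpace.toDual ℝ E (gh (a + t • v))) (a + t • v) := hg _
  have := hF.comp_hasDerivAt t hc
  simp at this
  exact this

/-- First-order lower bound for a convex differentiable function. -/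
lemma grad_lower (h : E → ℝ) (gh : E → E) (hconv : ConvexOn ℝ Set.univ h)
    (hg : ∀ z, HasGradientAt h (gh z) z) (a b : E) :
    h a + ⟪gh a, b - a⟫ ≤ h b := by
  set v := b - a with hv
  have hφ := line_hasDerivAt h gh hg a v
  have hconvφ : ConvexOn ℝ Set.univ (fun t : ℝ => h (a + t • v)) := by
    have := hconv.comp_affineMap (AffineMap.lineMap a b)
    simp only [Set.preimage_univ] at this
    refine this.congr (fun t _ => ?_)
    simp [AffineMap.lineMap_apply, hv]
    abel
  have := hconvφ.le_slope_of_hasDerivAt (Set.mem_univ (0:ℝ)) (Set.mem_univ 1) one_pos (hφ 0)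
  rw [slope_def_field] at this
  simp only [zero_smul, add_zero, one_smul, sub_zero, div_one] at this
  have hab : a + v = b := by rw [hv]; abel
  rw [hab] at this
  linarith

/-- The gradient of a convex differentiable function is a monotone operator. -/
lemma monotone_grad_of_convex (h : E → ℝ) (gh : E → E) (hconv : ConvexOn ℝ Set.univ h)
    (hg : ∀ z, HasGradientAt h (gh z) z) (a b : E) :
    0 ≤ ⟪gh b - gh a, b - a⟫ := by
  have h1 := grad_lower h gh hconv hg a b
  have h2 := grad_lower h gh hconv hg b a
  have e : ⟪gh b, a - b⟫ = -⟪gh b, b - a⟫ := by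
    rw [← inner_neg_right]; congr 1; abel
  rw [inner_sub_left]
  rw [e] at h2
  linarith

/-- A differentiable function with monotone gradient is convex. -/
lemma convexOn_of_monotone_grad (h : E → ℝ) (gh : E → E)
    (hg : ∀ z, HasGradientAt h (gh z) z)
    (hmono : ∀ a b : E, 0 ≤ ⟪gh b - gh a, b - a⟫) :
    ConvexOn ℝ Set.univ h := by
  refine ⟨convex_univ, fun a _ b _ p q hp hq hpq => ?_⟩
  set v := b - a with hv
  set φ : ℝ → ℝ := fun t => h (a + t • v) with hφdef
  have hφ : ∀ t, HasDerivAt φ ⟪gh (a + t • v), v⟫ t := line_hasDerivAt h gh hg a v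
  have hdiff : Differentiable ℝ φ := fun t => (hφ t).differentiableAt
  have hdm : Monotone (deriv φ) := by
    intro s t hst
    rw [(hφ s).deriv, (hφ t).deriv]
    have h0 := hmono (a + s • v) (a + t • v)
    have key : (a + t • v) - (a + s • v) = (t - s) • v := by
      rw [sub_smul]; abel
    rw [key, inner_smul_right, inner_sub_left] at h0
    rcases eq_or_lt_of_le hst with rfl | hlt
    · exact le_rfl
    · nlinarith [h0]
  have hcφ : ConvexOn ℝ Set.univ φ := hdm.convexOn_univ_of_deriv hdiff
  have h2 := hcφ.2 (Set.mem_univ (0:ℝ)) (Set.mem_univ (1:ℝ)) hp hq hpq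
  simp only [smul_eq_mul, mul_zero, mul_one, zero_add] at h2
  have hc : a + q • v = p • a + q • b := by
    have hp1 : p = 1 - q := by linarith
    rw [hp1, hv, smul_sub, sub_smul, one_smul]; abel
  calc h (p • a + q • b) = φ q := by rw [hφdef]; simp only []; rw [hc]
    _ ≤ p * φ 0 + q * φ 1 := h2
    _ = p • h a + q • h b := by
        have h1 : a + (1:ℝ) • v = b := by rw [hv, one_smul]; abel
        have h0 : a + (0:ℝ) • v = a := by rw [zero_smul, add_zero]
        simp only [hφdef, h0, h1, smul_eq_mul]

lemma hasGradientAt_sub_half_sq {f : E → ℝ} {v : E} (c : ℝ) {x : E}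
    (hf : HasGradientAt f v x) :
    HasGradientAt (fun z => f z - c / 2 * ‖z‖ ^ 2) (v - c • x) x := by
  rw [hasGradientAt_iff_hasFDerivAt] at hf ⊢
  have h2 : HasFDerivAt (fun z : E => c / 2 * ‖z‖ ^ 2)
      ((c / 2) • (2 • (innerSL ℝ x))) x :=
    ((hasStrictFDerivAt_norm_sq x).hasFDerivAt).const_smul (c / 2)
  have := hf.sub h2
  refine HasFDerivAt.congr_fderiv this ?_
  ext w
  simp [inner_sub_left, real_inner_smul_left]
  ring

lemma hasGradientAt_half_sq_sub {f : E → ℝ} {v : E} (c : ℝ) {x : E}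
    (hf : HasGradientAt f v x) :
    HasGradientAt (fun z => c / 2 * ‖z‖ ^ 2 - f z) (c • x - v) x := by
  rw [hasGradientAt_iff_hasFDerivAt] at hf ⊢
  have h2 : HasFDerivAt (fun z : E => c / 2 * ‖z‖ ^ 2)
      ((c / 2) • (2 • (innerSL ℝ x))) x :=
    ((hasStrictFDerivAt_norm_sq x).hasFDerivAt).const_smul (c / 2)
  have := h2.sub hf
  refine HasFDerivAt.congr_fderiv this ?_
  ext w
  simp [inner_sub_left, real_inner_smul_left]
  ring

lemma hasGradientAt_sub_inner {f : E → ℝ} {v : E} (w : E) {x : E}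
    (hf : HasGradientAt f v x) :
    HasGradientAt (fun z => f z - ⟪w, z⟫) (v - w) x := by
  rw [hasGradientAt_iff_hasFDerivAt] at hf ⊢
  have h2 : HasFDerivAt (fun z : E => ⟪w, z⟫) (innerSL ℝ w) x :=
    (innerSL ℝ w).hasFDerivAt
  have := hf.sub h2
  refine HasFDerivAt.congr_fderiv this ?_
  ext u
  simp [inner_sub_left]

end Helpers

/-- Bounds on the second Barzilai–Borwein step size (Equation (6) of the paper): for a
`μ`-strongly convex `f` with `L`-Lipschitz gradient and any secant pair
`s = x - x'`, `y = ∇f(x) - ∇f(x')` with `x ≠ x'`, one has `y ≠ 0` and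
`1/L ≤ α₂ ≤ α₁ ≤ 1/μ`, where `α₂ = ⟪s, y⟫/‖y‖²` and `α₁ = ‖s‖²/⟪s, y⟫`. -/
theorem second_BB_stepsize_bounds
    {E : Type*} [NormedAddCommGroup E] [InnerProductSpace ℝ E] [CompleteSpace E]
    (f : E → ℝ) (g : E → E) (μ L : ℝ)
    (hμ : 0 < μ) (hμL : μ ≤ L)
    (hgrad : ∀ x, HasGradientAt f (g x) x)
    (hsc : ConvexOn ℝ Set.univ (fun x => f x - μ / 2 * ‖x‖ ^ 2))
    (hlip : ∀ x y, ‖g x - g y‖ ≤ L * ‖x - y‖)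
    (x x' : E) (hne : x ≠ x') :
    g x - g x' ≠ 0 ∧
    1 / L ≤ ⟪x - x', g x - g x'⟫ / ‖g x - g x'‖ ^ 2 ∧
    ⟪x - x', g x - g x'⟫ / ‖g x - g x'‖ ^ 2 ≤
      ‖x - x'‖ ^ 2 / ⟪x - x', g x - g x'⟫ ∧
    ‖x - x'‖ ^ 2 / ⟪x - x', g x - g x'⟫ ≤ 1 / μ := by
  have hL : 0 < L := lt_of_lt_of_le hμ hμL
  -- gradient of the convexified function
  set gh1 : E → E := fun z => g z - μ • z with hgh1
  have hg1 : ∀ z, HasGradientAt (fun z => f z - μ / 2 * ‖z‖ ^ 2) (gh1 z) z :=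
    fun z => hasGradientAt_sub_half_sq μ (hgrad z)
  -- strong monotonicity of the gradient
  have strongmono : ∀ a b : E, μ * ‖b - a‖ ^ 2 ≤ ⟪g b - g a, b - a⟫ := by
    intro a b
    have h0 := monotone_grad_of_convex _ gh1 hsc hg1 a b
    have hv : gh1 b - gh1 a = (g b - g a) - μ • (b - a) := by
      simp only [hgh1, smul_sub]; abel
    rw [hv, inner_sub_left, real_inner_smul_left, real_inner_self_eq_norm_sq] at h0
    linarith
  -- f is convex
  have hfconv : ConvexOn ℝ Set.univ f :=
    convexOn_of_monotone_grad f g hgrad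
      (fun a b => le_trans (by positivity) (strongmono a b))
  -- co-coercivity (Baillon–Haddad)
  have cocoercive : ∀ a b : E,
      f a + ⟪g a, b - a⟫ + 1 / (2 * L) * ‖g b - g a‖ ^ 2 ≤ f b := by
    intro a b
    set φ : E → ℝ := fun z => f z - ⟪g a, z⟫ with hφ
    set gφ : E → E := fun z => g z - g a with hgφ
    have hgφ' : ∀ z, HasGradientAt φ (gφ z) z :=
      fun z => hasGradientAt_sub_inner (g a) (hgrad z)
    have hφconv : ConvexOn ℝ Set.univ φ := by
      apply convexOn_of_monotone_grad φ gφ hgφ'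
      intro u w
      have e : gφ w - gφ u = g w - g u := by simp only [hgφ]; abel
      rw [e]
      exact le_trans (by positivity) (strongmono u w)
    set q : E → ℝ := fun z => L / 2 * ‖z‖ ^ 2 - φ z with hq
    set gq : E → E := fun z => L • z - gφ z with hgq
    have hgq' : ∀ z, HasGradientAt q (gq z) z :=
      fun z => hasGradientAt_half_sq_sub L (hgφ' z)
    have hqconv : ConvexOn ℝ Set.univ q := by
      apply convexOn_of_monotone_grad q gq hgq'
      intro u w
      have hv : gq w - gq u = L • (w - u) - (g w - g u) := by
        simp only [hgq, hgφ, smul_sub]; abel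
      rw [hv, inner_sub_left, real_inner_smul_left, real_inner_self_eq_norm_sq]
      have hcs : ⟪g w - g u, w - u⟫ ≤ ‖g w - g u‖ * ‖w - u‖ := real_inner_le_norm _ _
      have hl := hlip w u
      nlinarith [norm_nonneg (w - u), norm_nonneg (g w - g u)]
    -- descent lemma
    have descent : ∀ u w : E, φ w ≤ φ u + ⟪gφ u, w - u⟫ + L / 2 * ‖w - u‖ ^ 2 := by
      intro u w
      have h0 := grad_lower q gq hqconv hgq' u w
      have e1 : ⟪gq u, w - u⟫ = L * ⟪u, w - u⟫ - ⟪gφ u, w - u⟫ := by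
        simp only [hgq, inner_sub_left, real_inner_smul_left]
      have e2 : ‖w‖ ^ 2 = ‖u‖ ^ 2 + 2 * ⟪u, w - u⟫ + ‖w - u‖ ^ 2 := by
        have h3 := norm_add_sq_real u (w - u)
        have h4 : u + (w - u) = w := by abel
        rw [h4] at h3
        linarith
      simp only [hq] at h0
      rw [e1] at h0
      nlinarith [e2, h0]
    -- x minimizes φ when a = x
    have hmin : ∀ z, φ a ≤ φ z := by
      intro z
      have h0 := grad_lower φ gφ hφconv hgφ' a z
      have e : gφ a = 0 := by simp [hgφ]
      rw [e] at h0
      simpa using h0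
    have h5 := descent b (b - (1 / L) • gφ b)
    have e3 : (b - (1 / L) • gφ b) - b = -((1 / L) • gφ b) := by abel
    have e4 : ⟪gφ b, (b - (1 / L) • gφ b) - b⟫ = -(1 / L) * ‖gφ b‖ ^ 2 := by
      rw [e3, inner_neg_right, real_inner_smul_right, real_inner_self_eq_norm_sq]; ring
    have e5 : ‖(b - (1 / L) • gφ b) - b‖ ^ 2 = (1 / L) ^ 2 * ‖gφ b‖ ^ 2 := by
      rw [e3, norm_neg, norm_smul, mul_pow, Real.norm_eq_abs, sq_abs]
    rw [e4, e5] at h5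
    have h6 := hmin (b - (1 / L) • gφ b)
    have h7 : φ a ≤ φ b - 1 / (2 * L) * ‖gφ b‖ ^ 2 := by
      calc φ a ≤ φ (b - (1 / L) • gφ b) := h6
        _ ≤ φ b + -(1 / L) * ‖gφ b‖ ^ 2 + L / 2 * ((1 / L) ^ 2 * ‖gφ b‖ ^ 2) := h5
        _ = φ b - 1 / (2 * L) * ‖gφ b‖ ^ 2 := by field_simp; ring
    simp only [hφ, hgφ] at h7
    have e6 : ⟪g a, b - a⟫ = ⟪g a, b⟫ - ⟪g a, a⟫ := inner_sub_right _ _ _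
    rw [e6]
    linarith
  -- basic positivity facts
  have hs0 : x - x' ≠ 0 := sub_ne_zero.mpr hne
  have hsnorm : 0 < ‖x - x'‖ := norm_pos_iff.mpr hs0
  have hsy : μ * ‖x - x'‖ ^ 2 ≤ ⟪g x - g x', x - x'⟫ := strongmono x' x
  have hip : 0 < ⟪g x - g x', x - x'⟫ :=
    lt_of_lt_of_le (mul_pos hμ (pow_pos hsnorm 2)) hsy
  have hip' : 0 < ⟪x - x', g x - g x'⟫ := by rwa [real_inner_comm]
  have hy0 : g x - g x' ≠ 0 := by
    intro h
    rw [h] at hip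
    simp at hip
  have hynorm : 0 < ‖g x - g x'‖ := norm_pos_iff.mpr hy0
  have hN2 : 0 < ‖g x - g x'‖ ^ 2 := pow_pos hynorm 2
  -- combined co-coercivity
  have hcc : 1 / L * ‖g x - g x'‖ ^ 2 ≤ ⟪x - x', g x - g x'⟫ := by
    have h1 := cocoercive x' x
    have h2 := cocoercive x x'
    have e1 : ‖g x' - g x‖ = ‖g x - g x'‖ := norm_sub_rev _ _
    have e2 : ⟪g x, x' - x⟫ = -⟪g x, x - x'⟫ := by
      rw [← inner_neg_right]; congr 1; abel
    have e3 : ⟪g x', x - x'⟫ = ⟪g x, x - x'⟫ - ⟪g x - g x', x - x'⟫ := by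
      rw [inner_sub_left]; ring
    rw [e1, e2] at h2
    rw [e3] at h1
    rw [real_inner_comm]
    have e4 : 1 / L * ‖g x - g x'‖ ^ 2 =
        1 / (2 * L) * ‖g x - g x'‖ ^ 2 + 1 / (2 * L) * ‖g x - g x'‖ ^ 2 := by
      field_simp
      ring
    rw [e4]
    linarith
  refine ⟨hy0, ?_, ?_, ?_⟩
  · have hcc' : ‖g x - g x'‖ ^ 2 ≤ L * ⟪x - x', g x - g x'⟫ := by
      have h := mul_le_mul_of_nonneg_left hcc hL.le
      rwa [← mul_assoc, mul_one_div_cancel hL.ne', one_mul] at h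
    rw [div_le_div_iff₀ hL hN2]
    linarith
  · rw [div_le_div_iff₀ hN2 hip']
    have hcs := real_inner_mul_inner_self_le (x - x') (g x - g x')
    rw [real_inner_self_eq_norm_sq, real_inner_self_eq_norm_sq] at hcs
    nlinarith [hcs]
  · rw [div_le_div_iff₀ hip' hμ]
    have : ⟪x - x', g x - g x'⟫ = ⟪g x - g x', x - x'⟫ := real_inner_comm _ _
    linarith [hsy]
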